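/- arXiv:1812.00178 — 5 statements merged into one kernel-verified Lean document; each statement's English description precedes it below -/
import Mathlib

section
/- Let p be prime, d ≥ 1, q = p^d, and 3 ≤ l ≤ q. The (q-l+1) × (q-1) matrix M over F_p, whose rows are the coefficient vectors (in degrees 1 through q-1) of the polynomials (1+x)^l - 1, x(1+x)^l, ..., x^{q-l-1}(1+x)^l, and x^{q-l}(1+x)^l - x^q, has rank exactly q - l over F_p. -/
/-!
Only the monomials `x^i (1+x)^l` matter: the corrections `-1` and `-x^q` of the first and last
rows sit in degrees `0` and `q`, outside the columns of `M`. Rows `1, …, q-l` restricted to the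
first `q-l` columns form an upper unitriangular block, so the rank is at least `q-l`. Conversely,
weighting row `i` by `binom(q-l, i)` sums the monomials to `(1+x)^q = 1 + x^q` (Frobenius), which
vanishes in degrees `1, …, q-1`; this nonzero vector in the left kernel bounds the rank by `q-l`.
-/

open Polynomial

/-- The `i`-th row polynomial of the paper's matrix `M` (equation (3)):
`(1+x)^l - 1` for `i = 0`, `x^(q-l)(1+x)^l - x^q` for `i = q-l`, and
`x^i (1+x)^l` for `0 < i < q-l`. -/
noncomputable def rowPoly (R : Type*) [CommRing R] (q l i : ℕ) : R[X] :=
  if i = 0 then (1 + X) ^ l - 1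
  else if i = q - l then X ^ (q - l) * (1 + X) ^ l - X ^ q
  else X ^ i * (1 + X) ^ l

/-- The paper's `(q-l+1) × (q-1)` matrix `M`: the `(i, j)` entry is the
coefficient of `x^(j+1)` in the `i`-th row polynomial, i.e. the rows are the
coefficient vectors (in degrees `1` through `q-1`) of the polynomials
`(1+x)^l - 1, x(1+x)^l, ..., x^(q-l-1)(1+x)^l, x^(q-l)(1+x)^l - x^q`. -/
noncomputable def paperM (R : Type*) [CommRing R] (q l : ℕ) :
    Matrix (Fin (q - l + 1)) (Fin (q - 1)) R :=
  fun i j => (rowPoly R q l i).coeff ((j : ℕ) + 1)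

open Matrix

theorem Matrix.rank_lt_card_height_of_vecMul_eq_zero {m n K : Type*} [Fintype m] [Fintype n]
    [Field K] {M : Matrix m n K} {v : m → K} (hv : v ≠ 0) (hM : v ᵥ* M = 0) :
    M.rank < Fintype.card m := by
  have hker : LinearMap.ker Mᵀ.mulVecLin ≠ ⊥ := by
    rw [Submodule.ne_bot_iff]
    exact ⟨v, by simpa [mulVec_transpose] using hM, hv⟩
  have hpos : Module.finrank K (LinearMap.ker Mᵀ.mulVecLin) ≠ 0 :=
    Submodule.finrank_eq_zero.not.mpr hker
  have := LinearMap.finrank_range_add_finrank_ker Mᵀ.mulVecLin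
  rw [Module.finrank_fintype_fun_eq_card] at this
  rw [← rank_transpose, Matrix.rank]
  omega

theorem Matrix.rank_eq_card_of_isUpperTriangular {n R : Type*} [Fintype n] [LinearOrder n]
    [CommRing R] [IsDomain R] {A : Matrix n n R} (hA : A.IsUpperTriangular)
    (hd : ∀ i, A i i ≠ 0) : A.rank = Fintype.card n := by
  have := rank_mul_eq_right_of_isUpperTriangular A (1 : Matrix n n R) hA hd
  rwa [mul_one, rank_one] at this

theorem sum_choose_mul_X_pow_mul_one_add_X_pow (R : Type*) [CommSemiring R] (m l : ℕ) :
    ∑ i ∈ Finset.range (m + 1), (m.choose i : R[X]) * (X ^ i * (1 + X) ^ l)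
      = (1 + X) ^ (m + l) := by
  calc _ = (∑ i ∈ Finset.range (m + 1), X ^ i * 1 ^ (m - i) * (m.choose i : R[X]))
        * (1 + X) ^ l := by
        rw [Finset.sum_mul]
        exact Finset.sum_congr rfl fun i _ => by ring
    _ = _ := by rw [← add_pow, add_comm X, pow_add]

theorem coeff_rowPoly (R : Type*) [CommRing R] {q l i j : ℕ} (hj0 : j ≠ 0) (hjq : j < q) :
    (rowPoly R q l i).coeff j = (X ^ i * (1 + X) ^ l).coeff j := by
  unfold rowPoly
  split_ifs <;> simp [*, coeff_one, coeff_X_pow, hjq.ne]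

theorem paperM_apply (R : Type*) [CommRing R] (q l : ℕ) (i : Fin (q - l + 1)) (j : Fin (q - 1)) :
    paperM R q l i j = (X ^ (i : ℕ) * (1 + X) ^ l).coeff ((j : ℕ) + 1) :=
  coeff_rowPoly R j.val.succ_ne_zero (by omega)

theorem vecMul_paperM_eq_zero (R : Type*) [CommRing R] (p : ℕ) [ExpChar R p] {d q l : ℕ}
    (hq : q = p ^ d) (hlq : l ≤ q) :
    (fun i : Fin (q - l + 1) => ((q - l).choose i : R)) ᵥ* paperM R q l = 0 := by
  have hfrobenius : ∑ i ∈ Finset.range (q - l + 1),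
      ((q - l).choose i : R[X]) * (X ^ i * (1 + X) ^ l) = 1 + X ^ q := by
    rw [sum_choose_mul_X_pow_mul_one_add_X_pow, Nat.sub_add_cancel hlq, hq, add_pow_expChar_pow,
      one_pow]
  ext j
  have hcoeff := congrArg (coeff · ((j : ℕ) + 1)) hfrobenius
  simp only [finsetSum_coeff, ← C_eq_natCast, coeff_C_mul, Finset.sum_range] at hcoeff
  simp only [vecMul, dotProduct, paperM_apply, Pi.zero_apply, hcoeff]
  simp [coeff_one, coeff_X_pow]
  omega

theorem le_rank_paperM (R : Type*) [CommRing R] [IsDomain R] {q l : ℕ} (hl : l ≠ 0) :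
    q - l ≤ (paperM R q l).rank := by
  set B := (paperM R q l).submatrix Fin.succ (Fin.castLE (by omega : q - l ≤ q - 1))
  have hB (i j : Fin (q - l)) :
      B i j = if i ≤ j then ((1 + X : R[X]) ^ l).coeff (j - i) else 0 := by
    simp only [B, submatrix_apply, paperM_apply, Fin.val_succ, Fin.val_castLE, coeff_X_pow_mul',
      Fin.le_iff_val_le_val, add_le_add_iff_right, Nat.add_sub_add_right]
  have hB_upper : B.IsUpperTriangular := fun i j (hji : j < i) => by
    rw [hB, if_neg hji.not_ge]
  have hB_diag (i : Fin (q - l)) : B i i ≠ 0 := by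
    simp [hB, coeff_zero_eq_eval_zero]
  calc q - l = B.rank := by
        rw [rank_eq_card_of_isUpperTriangular hB_upper hB_diag, Fintype.card_fin]
    _ ≤ (paperM R q l).rank := rank_submatrix_le _ _ _

theorem rank_paperM_le (K : Type*) [Field K] (p : ℕ) [ExpChar K p] {d q l : ℕ}
    (hq : q = p ^ d) (hlq : l ≤ q) : (paperM K q l).rank ≤ q - l := by
  have := rank_lt_card_height_of_vecMul_eq_zero (M := paperM K q l)
    (fun h => by simpa using congrFun h 0) (vecMul_paperM_eq_zero K p hq hlq)
  simpa [Nat.lt_succ_iff] using this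

theorem paperM_rank_zmod_general (p d l q : ℕ) (hp : p.Prime)
    (hq : q = p ^ d) (hl : 3 ≤ l) (hlq : l ≤ q) :
    (paperM (ZMod p) q l).rank = q - l := by
  have : Fact p.Prime := ⟨hp⟩
  exact le_antisymm (rank_paperM_le (ZMod p) p hq hlq) (le_rank_paperM (ZMod p) (by omega))

/-- For `p` prime, `q = p^d` (`d ≥ 1`), `3 ≤ l ≤ q`, the matrix
`M` has rank exactly `q - l` over `F_p`. -/
theorem paperM_rank_zmod (p d l q : ℕ) (hp : p.Prime) (hd : 0 < d)
    (hq : q = p ^ d) (hl : 3 ≤ l) (hlq : l ≤ q) :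
    (paperM (ZMod p) q l).rank = q - l :=
  paperM_rank_zmod_general p d l q hp hq hl hlq
end

section
/- Let p be prime, q = p^d, and 3 ≤ l ≤ q. Over F_p, the rows of the matrix M (coefficient vectors of (1+x)^l - 1, x(1+x)^l, ..., x^{q-l-1}(1+x)^l, x^{q-l}(1+x)^l - x^q) satisfy a nontrivial linear dependence; specifically, there exist scalars c_0, ..., c_{q-l} in F_p, not all zero, with Σ c_i · (row i) = 0. -/
open Polynomial Finset

lemma my_binom (R : Type*) [CommRing R] (n : ℕ) :
    ∑ i ∈ Finset.range (n+1), C ((n.choose i : R)) * X ^ i = (1 + X) ^ n := by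
  rw [add_comm (1 : R[X]) X, add_pow]
  simp [mul_comm]

lemma my_rowPoly_eq (R : Type*) [CommRing R] (q l i : ℕ) :
    (if i = 0 then (1 + X : R[X]) ^ l - 1
      else if i = q - l then X ^ (q - l) * (1 + X) ^ l - X ^ q
      else X ^ i * (1 + X) ^ l) = X ^ i * (1 + X) ^ l -
      (if i = 0 then 1 else if i = q - l then X ^ q else 0) := by
  split_ifs with h1 h2
  · simp [h1]
  · subst h2; ring
  · ring

lemma my_key (R : Type*) [CommRing R] (q l : ℕ) (hlq : l ≤ q) :
    ∑ i ∈ Finset.range (q - l + 1), C (((q - l).choose i : R)) *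
      (X ^ i * (1 + X) ^ l -
        (if i = 0 then 1 else if i = q - l then X ^ q else 0))
      = (1 + X) ^ q - 1 - (if q - l = 0 then 0 else X ^ q) := by
  set n := q - l with hn
  have hnl : n + l = q := Nat.sub_add_cancel hlq
  simp only [mul_sub, Finset.sum_sub_distrib]
  have h1 : ∑ i ∈ Finset.range (n+1), C ((n.choose i : R)) * (X ^ i * (1 + X) ^ l)
      = (1 + X) ^ q := by
    simp only [← mul_assoc]
    rw [← Finset.sum_mul, my_binom, ← pow_add, hnl]
  rw [h1]
  rcases eq_or_ne n 0 with h0 | h0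
  · simp [h0]
  · have hδ : ∀ i, (if i = 0 then (1 : R[X]) else if i = n then X ^ q else 0)
        = (if i = 0 then 1 else 0) + (if i = n then X ^ q else 0) := by
      intro i
      rcases eq_or_ne i 0 with rfl | hi
      · simp [Ne.symm h0]
      · simp [hi]
    simp only [hδ, mul_add, Finset.sum_add_distrib, mul_ite, mul_one, mul_zero,
      Finset.sum_ite_eq' (Finset.range (n+1))]
    simp [h0, Nat.lt_succ_self]
    ring


/-- For `p` prime, `q = p^d`, `3 ≤ l ≤ q`, the rows of `M` over
`F_p` satisfy a nontrivial linear dependence: there are scalars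
`c_0, ..., c_(q-l)` in `F_p`, not all zero, with `Σ_i c_i · (row i) = 0`. -/
theorem paperM_rows_dependent (p d l q : ℕ) (hp : p.Prime) (hd : 0 < d)
    (hq : q = p ^ d) (hl : 3 ≤ l) (hlq : l ≤ q) :
    ∃ c : Fin (q - l + 1) → ZMod p, c ≠ 0 ∧
      ∀ j : Fin (q - 1), ∑ i, c i * paperM (ZMod p) q l i j = 0 := by
  haveI := Fact.mk hp
  refine ⟨fun i => (((q - l).choose i : ℕ) : ZMod p), ?_, ?_⟩
  · intro h
    have h0 := congrFun h ⟨0, Nat.succ_pos _⟩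
    simp at h0
  · intro j
    have hkey := my_key (ZMod p) q l hlq
    have hrow : ∀ i : ℕ, rowPoly (ZMod p) q l i = X ^ i * (1 + X) ^ l -
        (if i = 0 then 1 else if i = q - l then X ^ q else 0) := fun i =>
      my_rowPoly_eq (ZMod p) q l i
    have hS : ∑ i ∈ Finset.range (q - l + 1), C (((q - l).choose i : ZMod p)) *
        rowPoly (ZMod p) q l i
        = (1 + X) ^ q - 1 - (if q - l = 0 then 0 else X ^ q) := by
      simp only [hrow]; exact hkey
    have hchar : ((1 : (ZMod p)[X]) + X) ^ q = 1 + X ^ q := by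
      rw [hq, add_pow_char_pow, one_pow]
    rw [hchar] at hS
    have hco := congrArg (fun P : (ZMod p)[X] => P.coeff ((j : ℕ) + 1)) hS
    have hjq : (j : ℕ) + 1 < q := by
      have := j.isLt; omega
    simp only [finset_sum_coeff, coeff_C_mul, coeff_sub, coeff_one, coeff_X_pow,
      coeff_add] at hco
    have hne : ¬ ((j : ℕ) + 1 = q) := Nat.ne_of_lt hjq
    simp only [paperM]
    rw [Fin.sum_univ_eq_sum_range
      (fun i => (((q - l).choose i : ZMod p)) * (rowPoly (ZMod p) q l i).coeff ((j:ℕ)+1))]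
    rw [hco]
    split_ifs with h0 <;> simp [hne]
end

section
/- Let p be prime, q = p^d, 3 ≤ l ≤ q, and let M over F_p be the (q-l+1) × (q-1) matrix of coefficient vectors of (1+x)^l - 1, x(1+x)^l, ..., x^{q-l-1}(1+x)^l, x^{q-l}(1+x)^l - x^q. Then the rank of M over F_p is at least q - l - 2. -/
open Polynomial

/-!
The rows `x (1+x)^l, …, x^(q-l-1) (1+x)^l`, read in the columns of degrees `1, …, q-l-1`,
form the upper triangular Toeplitz matrix of `(1+x)^l`, whose diagonal is the constant
coefficient `1`. This `(q-l-1) × (q-l-1)` minor is therefore invertible.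
-/

section

variable {R : Type*} [CommRing R]

theorem Polynomial.det_toeplitz_upper (f : R[X]) (n : ℕ) :
    (Matrix.of fun i j : Fin n => if i ≤ j then f.coeff (j - i : ℕ) else 0).det =
      f.coeff 0 ^ n := by
  have htri : Matrix.IsUpperTriangular
      (Matrix.of fun i j : Fin n => if i ≤ j then f.coeff (j - i : ℕ) else 0) :=
    fun _ _ hji => if_neg (not_le.mpr hji)
  simp [Matrix.det_of_isUpperTriangular htri]

theorem rowPoly_of_ne {q l i : ℕ} (hi0 : i ≠ 0) (hiq : i ≠ q - l) :
    rowPoly R q l i = X ^ i * (1 + X) ^ l := by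
  simp [rowPoly, hi0, hiq]

theorem paperM_submatrix_eq_toeplitz (q l : ℕ) :
    (paperM R q l).submatrix (fun i => (Fin.castLE (by omega) i).succ) (Fin.castLE (by omega)) =
      Matrix.of fun i j : Fin (q - l - 1) =>
        if i ≤ j then (((1 : R[X]) + X) ^ l).coeff (j - i : ℕ) else 0 := by
  ext i j
  have hi := i.isLt
  rw [Matrix.submatrix_apply, paperM, Fin.val_succ, Fin.val_castLE, Fin.val_castLE,
    rowPoly_of_ne (by omega) (by omega), mul_comm, coeff_mul_X_pow', Matrix.of_apply]
  by_cases hij : i ≤ j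
  · rw [if_pos (by omega), if_pos hij]
    congr 1
    omega
  · rw [if_neg (by omega), if_neg hij]

theorem paperM_rank_ge [StrongRankCondition R] (q l : ℕ) :
    q - l - 1 ≤ (paperM R q l).rank := by
  have hunit : IsUnit (Matrix.of fun i j : Fin (q - l - 1) =>
      if i ≤ j then (((1 : R[X]) + X) ^ l).coeff (j - i : ℕ) else 0) := by
    rw [Matrix.isUnit_iff_isUnit_det, Polynomial.det_toeplitz_upper]
    simp [coeff_zero_eq_eval_zero]
  rw [← paperM_submatrix_eq_toeplitz] at hunit
  calc q - l - 1 = _ := (Fintype.card_fin _).symm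
    _ = _ := (Matrix.rank_of_isUnit _ hunit).symm
    _ ≤ _ := Matrix.rank_submatrix_le _ _ _

end

theorem paperM_rank_zmod_lower_general (p l q : ℕ) (hp : p.Prime) :
    q - l - 2 ≤ (paperM (ZMod p) q l).rank :=
  haveI : Fact p.Prime := ⟨hp⟩
  (Nat.sub_le_sub_left (by norm_num) _).trans (paperM_rank_ge q l)

/-- For `p` prime, `q = p^d`, `3 ≤ l ≤ q`, the rank of `M` over
`F_p` is at least `q - l - 2`. -/
theorem paperM_rank_zmod_lower (p d l q : ℕ) (hp : p.Prime) (hd : 0 < d)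
    (hq : q = p ^ d) (hl : 3 ≤ l) (hlq : l ≤ q) :
    q - l - 2 ≤ (paperM (ZMod p) q l).rank :=
  paperM_rank_zmod_lower_general p l q hp
end

section
/- Let q ≥ l ≥ 3 with q = p^d for a prime p. Then the rank over Q of the matrix M (rows: coefficient vectors of (1+x)^l - 1, x(1+x)^l, ..., x^{q-l-1}(1+x)^l, x^{q-l}(1+x)^l - x^q) is strictly greater than its rank over F_p; in fact rank_Q(M) - rank_{F_p}(M) = 1. -/
open Polynomial

/-! Write `m = q - l`. A combination `∑ cᵢ Mᵢ` of the rows of `M` is the coefficient vector, in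
degrees `1, …, q - 1`, of `g (1 + X)^l` with `g = ∑ cᵢ Xⁱ` of degree `≤ m`, so it vanishes iff
`g (1 + X)^l = a + b X^q`. Evaluating at `-1` (in characteristic zero, after differentiating
once, which is harmless as `l ≥ 2`) forces `b = 0`, then `a = 0`, then `g = 0`: all rows are
independent over `ℚ`, and the last `m` rows are independent over any field. Over `𝔽_p`, the
choice `g = (1 + X)^m` gives `g (1 + X)^l = (1 + X)^q = 1 + X^q`, a nontrivial relation. Hence
the ranks are `m + 1` over `ℚ` and `m` over `𝔽_p`. -/

namespace Polynomial

section Semiring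

variable {R : Type*} [Semiring R]

def midCoeffs (q : ℕ) : R[X] →ₗ[R] Fin (q - 1) → R where
  toFun P j := P.coeff ((j : ℕ) + 1)
  map_add' _ _ := by ext; simp
  map_smul' _ _ := by ext; simp

@[simp]
theorem midCoeffs_apply (q : ℕ) (P : R[X]) (j : Fin (q - 1)) :
    midCoeffs q P j = P.coeff ((j : ℕ) + 1) := rfl

theorem midCoeffs_C_add_C_mul_X_pow (q : ℕ) (a b : R) :
    midCoeffs q (C a + C b * X ^ q) = 0 := by
  ext j
  have : (j : ℕ) + 1 ≠ q := by omega
  simp [coeff_X_pow, this]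

theorem eq_C_add_C_mul_X_pow_of_midCoeffs_eq_zero {q : ℕ} (hq : q ≠ 0) {P : R[X]}
    (hP : P.natDegree ≤ q) (h : midCoeffs q P = 0) :
    P = C (P.coeff 0) + C (P.coeff q) * X ^ q := by
  ext n
  simp only [coeff_add, coeff_C, coeff_C_mul, coeff_X_pow]
  rcases Nat.lt_trichotomy n q with hn | rfl | hn
  · rcases n with _ | n
    · simp [hq.symm]
    · simpa [hn.ne] using congrFun h ⟨n, by omega⟩
  · simp [hq]
  · simp [coeff_eq_zero_of_natDegree_lt (hP.trans_lt hn), hn.ne', show n ≠ 0 by omega]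

theorem coeff_sum_smul_X_pow {n : ℕ} (c : Fin n → R) (i : Fin n) :
    (∑ k, c k • X ^ (k : ℕ) : R[X]).coeff i = c i := by
  simp [coeff_X_pow, Fin.val_inj]

theorem natDegree_sum_smul_X_pow_le {n : ℕ} (c : Fin (n + 1) → R) :
    (∑ k, c k • X ^ (k : ℕ) : R[X]).natDegree ≤ n := by
  refine natDegree_sum_le_of_forall_le _ _ fun k _ => ?_
  exact (natDegree_smul_le _ _).trans ((natDegree_X_pow_le _).trans (Nat.lt_succ_iff.mp k.2))

theorem natDegree_mul_one_add_X_pow_le {q l : ℕ} {g : R[X]} (hlq : l ≤ q)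
    (hg : g.natDegree ≤ q - l) : (g * (1 + X) ^ l).natDegree ≤ q := by
  have h1 : (1 + X : R[X]).natDegree ≤ 1 :=
    (natDegree_add_le _ _).trans (by simpa using natDegree_X_le)
  have := natDegree_pow_le_of_le l h1
  have := natDegree_mul_le (p := g) (q := (1 + X) ^ l)
  omega

end Semiring

section IsDomain

variable {R : Type*} [CommRing R] [IsDomain R] {q l : ℕ} {g : R[X]}

theorem eq_zero_of_midCoeffs_mul_one_add_X_pow_eq_zero (hl : l ≠ 0) (hlq : l ≤ q)
    (hg : g.natDegree ≤ q - l) (hg0 : g.coeff 0 = 0) (h : midCoeffs q (g * (1 + X) ^ l) = 0) :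
    g = 0 := by
  have hP := eq_C_add_C_mul_X_pow_of_midCoeffs_eq_zero (by omega)
    (natDegree_mul_one_add_X_pow_le hlq hg) h
  set b := (g * (1 + X) ^ l).coeff q
  rw [mul_coeff_zero, hg0, zero_mul, C_0, zero_add] at hP
  have hb : b = 0 := by
    simpa [zero_pow hl] using congrArg (eval (-1)) hP
  rw [hb, C_0, zero_mul] at hP
  have h1X : (1 + X : R[X]) ≠ 0 := by rw [add_comm, ← C_1]; exact X_add_C_ne_zero 1
  exact (mul_eq_zero.mp hP).resolve_right (pow_ne_zero _ h1X)

theorem eq_zero_of_midCoeffs_mul_one_add_X_pow_eq_zero_of_charZero [CharZero R] (hl : 2 ≤ l)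
    (hlq : l ≤ q) (hg : g.natDegree ≤ q - l) (h : midCoeffs q (g * (1 + X) ^ l) = 0) :
    g = 0 := by
  have hP := eq_C_add_C_mul_X_pow_of_midCoeffs_eq_zero (by omega)
    (natDegree_mul_one_add_X_pow_le hlq hg) h
  set a := (g * (1 + X) ^ l).coeff 0
  set b := (g * (1 + X) ^ l).coeff q
  have hb : b = 0 := by
    have := congrArg (fun P => eval (-1) (derivative P)) hP
    simpa [derivative_mul, derivative_pow, zero_pow (by omega : l - 1 ≠ 0),
      zero_pow (by omega : l ≠ 0), show q ≠ 0 by omega, eq_comm (a := (0 : R))] using this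
  have ha : a = 0 := by
    simpa [hb, zero_pow (by omega : l ≠ 0)] using (congrArg (eval (-1)) hP).symm
  refine eq_zero_of_midCoeffs_mul_one_add_X_pow_eq_zero (by omega) hlq hg ?_ h
  simpa [a, mul_coeff_zero, coeff_one_add_X_pow] using ha

end IsDomain

end Polynomial

open Polynomial

section Rows

variable {R : Type*} [CommRing R]

theorem paperM_map_intCast (q l : ℕ) :
    (paperM ℤ q l).map (Int.cast : ℤ → R) = paperM R q l := by
  ext i j
  have hrow : (rowPoly ℤ q l i).map (Int.castRingHom R) = rowPoly R q l i := by
    unfold rowPoly; split_ifs <;> simp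
  simp [paperM, ← hrow]

/-- Up to constants and multiples of `X ^ q`, which `midCoeffs q` ignores, the `i`-th row
polynomial is `X ^ i * (1 + X) ^ l`. -/
theorem paperM_eq_midCoeffs (q l : ℕ) (i : Fin (q - l + 1)) :
    paperM R q l i = midCoeffs q (X ^ (i : ℕ) * (1 + X) ^ l) := by
  ext j
  have hj : (j : ℕ) + 1 ≠ q := by omega
  simp only [paperM, rowPoly, midCoeffs_apply]
  split_ifs with h0 hm
  · simp [h0, coeff_one]
  · simp [hm, coeff_X_pow, hj]
  · rfl

theorem sum_smul_paperM {q l : ℕ} (c : Fin (q - l + 1) → R) :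
    ∑ i, c i • paperM R q l i = midCoeffs q ((∑ i, c i • X ^ (i : ℕ)) * (1 + X) ^ l) := by
  simp only [paperM_eq_midCoeffs, ← map_smul, ← map_sum, Finset.sum_mul, smul_mul_assoc]

end Rows

section Field

variable {K : Type*} [Field K] {q l : ℕ}

theorem linearIndependent_paperM_succ (hl : l ≠ 0) (hlq : l ≤ q) :
    LinearIndependent K ((paperM K q l).submatrix Fin.succ id).row := by
  rw [Fintype.linearIndependent_iff]
  intro c hc i
  set c' : Fin (q - l + 1) → K := Fin.cons 0 c
  have hsum : ∑ k, c' k • paperM K q l k = 0 := by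
    have hc' : ∑ i, c i • paperM K q l i.succ = 0 := hc
    simpa [Fin.sum_univ_succ, c'] using hc'
  have hg := eq_zero_of_midCoeffs_mul_one_add_X_pow_eq_zero hl hlq
    (natDegree_sum_smul_X_pow_le c') (by simpa [c'] using coeff_sum_smul_X_pow c' 0)
    (sum_smul_paperM c' ▸ hsum)
  simpa [c', hg] using (coeff_sum_smul_X_pow c' i.succ).symm

theorem linearIndependent_paperM [CharZero K] (hl : 2 ≤ l) (hlq : l ≤ q) :
    LinearIndependent K (paperM K q l).row := by
  rw [Fintype.linearIndependent_iff]
  intro c hc i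
  have hg := eq_zero_of_midCoeffs_mul_one_add_X_pow_eq_zero_of_charZero hl hlq
    (natDegree_sum_smul_X_pow_le c) (sum_smul_paperM c ▸ hc)
  simpa [hg] using (coeff_sum_smul_X_pow c i).symm

theorem not_linearIndependent_paperM (p d : ℕ) [ExpChar K p] (hq : q = p ^ d) (hlq : l ≤ q) :
    ¬ LinearIndependent K (paperM K q l).row := by
  rw [Fintype.not_linearIndependent_iff]
  refine ⟨fun i : Fin (q - l + 1) => ((q - l).choose (i : ℕ) : K), ?_, 0, by simp⟩
  have hg : ∑ i : Fin (q - l + 1), ((q - l).choose i : K) • (X : K[X]) ^ (i : ℕ) =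
      (1 + X) ^ (q - l) := by
    rw [add_comm (1 : K[X]), add_pow,
      ← Fin.sum_univ_eq_sum_range (fun i => X ^ i * 1 ^ (q - l - i) * ((q - l).choose i : K[X]))]
    simp [mul_comm, Nat.cast_smul_eq_nsmul, nsmul_eq_mul]
  rw [Matrix.row_def, sum_smul_paperM, hg, ← pow_add, Nat.sub_add_cancel hlq, hq,
    add_pow_expChar_pow, one_pow, ← hq]
  simpa using midCoeffs_C_add_C_mul_X_pow q (1 : K) 1

theorem rank_paperM_of_charZero [CharZero K] (hl : 2 ≤ l) (hlq : l ≤ q) :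
    (paperM K q l).rank = q - l + 1 := by
  simpa using (linearIndependent_paperM hl hlq).rank_matrix

theorem rank_paperM_of_expChar (p d : ℕ) [ExpChar K p] (hq : q = p ^ d) (hl : l ≠ 0)
    (hlq : l ≤ q) : (paperM K q l).rank = q - l := by
  have hle : q - l ≤ (paperM K q l).rank := by
    have := (paperM K q l).rank_submatrix_le Fin.succ id
    rwa [(linearIndependent_paperM_succ hl hlq).rank_matrix, Fintype.card_fin] at this
  have hlt : (paperM K q l).rank < q - l + 1 := by
    have hne := mt linearIndependent_iff_card_eq_finrank_span.mpr
      (not_linearIndependent_paperM (K := K) p d hq hlq)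
    rw [Matrix.rank_eq_finrank_span_row, ← Set.finrank]
    simpa using lt_of_le_of_ne (finrank_range_le_card _) (Ne.symm hne)
  omega

end Field

theorem paperM_rank_drop_general (p d l q : ℕ) (hp : p.Prime)
    (hq : q = p ^ d) (hl : 3 ≤ l) (hlq : l ≤ q) :
    (((paperM ℤ q l).map (Int.cast : ℤ → ZMod p)).rank <
      ((paperM ℤ q l).map (Int.cast : ℤ → ℚ)).rank) ∧
    ((paperM ℤ q l).map (Int.cast : ℤ → ℚ)).rank =
      ((paperM ℤ q l).map (Int.cast : ℤ → ZMod p)).rank + 1 := by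
  have : Fact p.Prime := ⟨hp⟩
  rw [paperM_map_intCast, paperM_map_intCast, rank_paperM_of_charZero (K := ℚ) (by omega) hlq,
    rank_paperM_of_expChar (K := ZMod p) p d hq (by omega) hlq]
  omega

/-- For `p` prime, `q = p^d`, `3 ≤ l ≤ q`, the rank over `ℚ`
of the integer matrix `M` is strictly greater than its rank over `F_p`; in fact
the difference is exactly `1`. -/
theorem paperM_rank_drop (p d l q : ℕ) (hp : p.Prime) (hd : 0 < d)
    (hq : q = p ^ d) (hl : 3 ≤ l) (hlq : l ≤ q) :
    (((paperM ℤ q l).map (Int.cast : ℤ → ZMod p)).rank <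
      ((paperM ℤ q l).map (Int.cast : ℤ → ℚ)).rank) ∧
    ((paperM ℤ q l).map (Int.cast : ℤ → ℚ)).rank =
      ((paperM ℤ q l).map (Int.cast : ℤ → ZMod p)).rank + 1 :=
  paperM_rank_drop_general p d l q hp hq hl hlq
end

section
/- Let p be prime, q = p^d with d ≥ 1, and 3 ≤ l ≤ q. Then in F_p[x], the quotient (x^q + 1)/(1+x)^l is a polynomial of degree q - l whose coefficient vector provides an explicit element of the kernel of the transpose of the matrix M over F_p. -/
open Polynomial

/-- For `p` prime, `q = p^d` (`d ≥ 1`), `3 ≤ l ≤ q`, the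
quotient `g = (x^q + 1)/(1+x)^l` exists in `F_p[x]`, has degree `q - l`, and
its coefficient vector is an explicit element of the kernel of the transpose of
`M` over `F_p`: `Σ_i g_i · (row i of M) = 0` in `F_p^(q-1)`. -/
theorem quotient_in_kernel (p d l q : ℕ) (hp : p.Prime) (hd : 0 < d)
    (hq : q = p ^ d) (hl : 3 ≤ l) (hlq : l ≤ q) :
    ∃ g : (ZMod p)[X], (1 + X) ^ l * g = X ^ q + 1 ∧ g.degree = (q - l : ℕ) ∧
      ∀ j : Fin (q - 1), ∑ i : Fin (q - l + 1), g.coeff i * paperM (ZMod p) q l i j = 0 := by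
  haveI : Fact p.Prime := ⟨hp⟩
  have hX1 : (1 + X : (ZMod p)[X]) = X + C 1 := by rw [C_1]; ring
  have hdeg1 : (1 + X : (ZMod p)[X]).degree = 1 := by rw [hX1]; exact degree_X_add_C 1
  set g : (ZMod p)[X] := (1 + X) ^ (q - l) with hg
  have hmul : (1 + X : (ZMod p)[X]) ^ l * g = X ^ q + 1 := by
    rw [hg, ← pow_add, Nat.add_sub_cancel' hlq, hq, add_pow_char_pow, one_pow, add_comm]
  refine ⟨g, hmul, ?_, ?_⟩
  · rw [hg, degree_pow, hdeg1]; simp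
  · intro j
    have hjlt : (j : ℕ) + 1 < q := by
      have := j.isLt
      omega
    -- each row's coefficient at j+1 equals that of X^i * (1+X)^l
    have hrow : ∀ i : ℕ, (rowPoly (ZMod p) q l i).coeff ((j : ℕ) + 1)
        = (X ^ i * (1 + X) ^ l : (ZMod p)[X]).coeff ((j : ℕ) + 1) := by
      intro i
      unfold rowPoly
      split_ifs with h0 hql
      · subst h0
        rw [coeff_sub, coeff_one]
        simp
      · subst hql
        rw [coeff_sub, coeff_X_pow, if_neg (by omega)]
        ring
      · rfl
    have hn1 : (1 + X : (ZMod p)[X]).natDegree = 1 := natDegree_eq_of_degree_eq_some hdeg1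
    have hnd : g.natDegree < q - l + 1 := by
      have : g.natDegree ≤ (q - l) * (1 + X : (ZMod p)[X]).natDegree := natDegree_pow_le
      rw [hn1, mul_one] at this
      omega
    have step1 : ∑ i : Fin (q - l + 1), g.coeff i * paperM (ZMod p) q l i j
        = ∑ i ∈ Finset.range (q - l + 1),
            (C (g.coeff i) * (X ^ i * (1 + X) ^ l)).coeff ((j : ℕ) + 1) := by
      rw [← Fin.sum_univ_eq_sum_range
        (fun i => (C (g.coeff i) * (X ^ i * (1 + X) ^ l) : (ZMod p)[X]).coeff ((j : ℕ) + 1))]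
      refine Finset.sum_congr rfl fun i _ => ?_
      rw [coeff_C_mul, paperM, hrow]
    rw [step1]
    have step2 : ∑ i ∈ Finset.range (q - l + 1),
            (C (g.coeff i) * (X ^ i * (1 + X) ^ l) : (ZMod p)[X]).coeff ((j : ℕ) + 1)
        = ((∑ i ∈ Finset.range (q - l + 1), C (g.coeff i) * X ^ i) * (1 + X) ^ l).coeff
            ((j : ℕ) + 1) := by
      rw [Finset.sum_mul, finset_sum_coeff]
      exact Finset.sum_congr rfl fun i _ => by rw [mul_assoc]
    rw [step2]
    have hgsum : (∑ i ∈ Finset.range (q - l + 1), C (g.coeff i) * X ^ i) = g := by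
      simp only [C_mul_X_pow_eq_monomial]
      exact (as_sum_range' g _ hnd).symm
    rw [hgsum, mul_comm, hmul, coeff_add, coeff_X_pow,
      if_neg (by omega), coeff_one, if_neg (by omega), add_zero]
end
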